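/- Let (M,ω) be a 2n-dimensional compact symplectic manifold, N a compact oriented isotropic submanifold of M, and [τ_N] the Thom class of N. Then [ω∧τ_N]=0 in H^*(M,ℝ). -/
import Mathlib


/-!
STATEMENT 16: On a 2n-dimensional compact symplectic manifold (M,ω), if N is a
compact oriented isotropic submanifold with Thom class [τ_N], then [ω ∧ τ_N] = 0.

The submanifold N is encoded through the algebra FN of differential forms on N,
the restriction (pullback) map res : F → FN, integration over N, and Stokes'
theorem on the closed manifold N.  The Thom class is characterized by
∫_M β ∧ τ = ∫_N (β|_N) for every closed form β of degree dim N = 2n - q, and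
isotropy of N by res ω = 0.  Poincaré duality on the compact oriented manifold M
is included as a hypothesis.
-/

theorem stmt_16
    -- dimension
    (n : ℕ) (hn : 0 < n)
    -- the manifold M
    (M : Type) [TopologicalSpace M] [CompactSpace M] [T2Space M]
    -- the algebra of smooth differential forms on M, with wedge product
    (F : Type) [Ring F] [Algebra ℝ F]
    -- the grading by degree
    (Ω : ℕ → Submodule ℝ F) [GradedAlgebra Ω]
    (htop : ∀ k, 2 * n < k → Ω k = ⊥)
    -- the exterior derivative
    (d : F →ₗ[ℝ] F)
    (hd2 : ∀ a, d (d a) = 0)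
    (hddeg : ∀ k, ∀ a ∈ Ω k, d a ∈ Ω (k + 1))
    (hleib : ∀ k, ∀ a ∈ Ω k, ∀ b, d (a * b) = d a * b + ((-1 : ℝ)) ^ k • (a * d b))
    -- the symplectic Hodge star operator
    (sstar : F →ₗ[ℝ] F)
    (hstardeg : ∀ k, k ≤ 2 * n → ∀ a ∈ Ω k, sstar a ∈ Ω (2 * n - k))
    (hstarstar : ∀ a, sstar (sstar a) = a)
    -- the symplectic form: closed, of degree 2, nondegenerate (Lefschetz property
    -- at the level of forms)
    (ω : F) (hω : ω ∈ Ω 2) (hωcl : d ω = 0)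
    (hlef : ∀ k, k ≤ n → ∀ b ∈ Ω (2 * n - k), ∃! a, a ∈ Ω k ∧ ω ^ (n - k) * a = b)
    -- supports of forms
    (supp : F → Set M)
    (hsuppcl : ∀ a, IsClosed (supp a))
    (hsadd : ∀ a b, supp (a + b) ⊆ supp a ∪ supp b)
    (hssmul : ∀ (r : ℝ) (a : F), supp (r • a) ⊆ supp a)
    (hsmul : ∀ a b, supp (a * b) ⊆ supp a ∩ supp b)
    (hsd : ∀ a, supp (d a) ⊆ supp a)
    -- integration over M and Stokes' theorem (M is closed and oriented)
    (intM : F →ₗ[ℝ] ℝ)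
    (hstokesM : ∀ a, intM (d a) = 0)
    (hintMdeg : ∀ j, j ≠ 2 * n → ∀ a ∈ Ω j, intM a = 0)
    -- Poincaré duality on M: a closed form pairing to zero with all closed forms
    -- of complementary degree is exact
    (hPD : ∀ k, k ≤ 2 * n → ∀ a ∈ Ω k, d a = 0 →
      (∀ b ∈ Ω (2 * n - k), d b = 0 → intM (b * a) = 0) → ∃ c, a = d c)
    -- the compact oriented submanifold N, of codimension q, via its forms
    (q : ℕ) (hq : 0 < q) (hq2n : q ≤ 2 * n)
    (FN : Type) [Ring FN] [Algebra ℝ FN]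
    (dN : FN →ₗ[ℝ] FN)
    (res : F →ₐ[ℝ] FN)                 -- restriction of forms to N
    (hresd : ∀ a, res (d a) = dN (res a))
    (intN : FN →ₗ[ℝ] ℝ)                -- integration over N
    (hstokesN : ∀ b, intN (dN b) = 0)  -- N is closed and oriented
    -- N is isotropic: ω restricts to zero on N
    (hiso : res ω = 0)
    -- the Thom class τ of N: a closed q-form with ∫_M β ∧ τ = ∫_N β|_N for every
    -- closed form β of degree dim N = 2n - q
    (τ : F) (hτ : τ ∈ Ω q) (hτcl : d τ = 0)
    (hThom : ∀ b ∈ Ω (2 * n - q), d b = 0 → intM (b * τ) = intN (res b)) :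
    -- conclusion: [ω ∧ τ_N] = 0
    ∃ c, ω * τ = d c := by
  have hmem : ω * τ ∈ Ω (q + 2) := by
    have := SetLike.mul_mem_graded hω hτ
    rwa [Nat.add_comm] at this
  by_cases hc : q + 2 ≤ 2 * n
  · -- closedness of ω * τ
    have hcl : d (ω * τ) = 0 := by
      rw [hleib 2 ω hω τ, hωcl, hτcl, zero_mul, mul_zero, smul_zero, add_zero]
    apply hPD (q + 2) hc (ω * τ) hmem hcl
    intro b hb hbcl
    have hbω : b * ω ∈ Ω (2 * n - q) := by
      have := SetLike.mul_mem_graded hb hω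
      have h2 : 2 * n - (q + 2) + 2 = 2 * n - q := by omega
      rwa [h2] at this
    have hbωcl : d (b * ω) = 0 := by
      rw [hleib _ b hb ω, hbcl, hωcl, zero_mul, mul_zero, smul_zero, add_zero]
    have := hThom (b * ω) hbω hbωcl
    rw [← mul_assoc, this, map_mul, hiso, mul_zero, map_zero]
  · have : Ω (q + 2) = ⊥ := htop (q + 2) (by omega)
    rw [this, Submodule.mem_bot] at hmem
    exact ⟨0, by rw [hmem, map_zero]⟩
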